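/- Let c, d > 2 and n = c + d. Consider the polynomial ring A = ℂ[T_{ij} : 1 ≤ i < j ≤ n] and the ring B = ℂ[S_{αβ}, S_κ, S_{γδ} : 1 ≤ α < β ≤ c, 1 ≤ κ ≤ n, c+1 ≤ γ < δ ≤ n]. Define the Segre-type homomorphism σ: A → B by σ(T_{ij}) = S_{ij} if j ≤ c, σ(T_{ij}) = S_i S_j if i ≤ c < j, and σ(T_{ij}) = S_{ij} if c+1 ≤ i. Then the kernel of σ is generated by the binomials g_{ijkl} := −T_{ik}T_{jl} + T_{il}T_{jk} for 1 ≤ i < j ≤ c < k < l ≤ n. -/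

import Mathlib

open MvPolynomial

/-- Index set for the Plücker variables `T_{ij}`, `i < j`. -/
abbrev PIdx (n : ℕ) := {p : Fin n × Fin n // p.1 < p.2}

/-- Index set for the variables of `B`: the variables `S_{αβ}` (`α < β ≤ c`) and
`S_{γδ}` (`c + 1 ≤ γ < δ`) are indexed by pairs lying entirely inside `{1,…,c}` or
entirely inside `{c+1,…,n}` (0-indexed: `p.2.val < c` or `c ≤ p.1.val`), and the
variables `S_κ` (`1 ≤ κ ≤ n`) are indexed by `Fin n`. -/
abbrev BVar (c n : ℕ) :=
  {p : PIdx n // p.val.2.val < c ∨ c ≤ p.val.1.val} ⊕ Fin n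

/-- The Segre-type homomorphism `σ : A → B`: `T_{ij} ↦ S_{ij}` if `j ≤ c`,
`T_{ij} ↦ S_iS_j` if `i ≤ c < j`, and `T_{ij} ↦ S_{ij}` if `c + 1 ≤ i`. -/
noncomputable def segre (c n : ℕ) :
    MvPolynomial (PIdx n) ℂ →ₐ[ℂ] MvPolynomial (BVar c n) ℂ :=
  aeval (fun p : PIdx n =>
    if h : p.val.2.val < c ∨ c ≤ p.val.1.val then X (Sum.inl ⟨p, h⟩)
    else X (Sum.inr p.val.1) * X (Sum.inr p.val.2))

/-- The variable `T_{ij}` in `A = ℂ[T_{ij}]`. -/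
noncomputable def Tv {n : ℕ} (i j : Fin n) (h : i < j) : MvPolynomial (PIdx n) ℂ :=
  X ⟨(i, j), h⟩

/-- The binomials `g_{ijkl} = -T_{ik}T_{jl} + T_{il}T_{jk}` for
`1 ≤ i < j ≤ c < k < l ≤ n` (0-indexed: `j.val < c ≤ k.val`). -/
def segreKerGens (c n : ℕ) : Set (MvPolynomial (PIdx n) ℂ) :=
  {P | ∃ (i j k l : Fin n) (hij : i < j) (hjk : j < k) (hkl : k < l),
    j.val < c ∧ c ≤ k.val ∧
    P = - Tv i k (hij.trans hjk) * Tv j l (hjk.trans hkl)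
          + Tv i l (hij.trans (hjk.trans hkl)) * Tv j k hjk}

/-!
The map `σ` sends every monomial to a monomial, `T^m ↦ S^(ψ m)` with `ψ` additive, so its kernel
is spanned by the binomials `T^m - T^m'` with `ψ m = ψ m'`. Such a binomial lies in the ideal of
the `g_{ijkl}` by induction on `m'`: a variable `T_p` of `T^m'` with `p` inside one block appears
in `T^m` with the same exponent, and a mixed variable `T_{ik}` (`i ≤ c < k`) can be moved into
`T^m` by one exchange `T_{ik'} T_{i'k} ↦ T_{ik} T_{i'k'}` modulo the `g`'s, using that `ψ`
records the row and column sums of the mixed part. Cancelling the common variable lowers the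
degree.
-/

theorem Finsupp.linearCombination_apply_ne_zero_iff {σ τ : Type*} (v : σ → τ →₀ ℕ)
    (m : σ →₀ ℕ) (t : τ) :
    Finsupp.linearCombination ℕ v m t ≠ 0 ↔ ∃ q ∈ m.support, v q t ≠ 0 := by
  simp [Finsupp.linearCombination_apply, Finsupp.sum, Finsupp.finsetSum_apply]

theorem Finsupp.exists_eq_add_single_add_single {σ : Type*} {m : σ →₀ ℕ} {q r : σ}
    (hq : q ∈ m.support) (hr : r ∈ m.support) (hqr : q ≠ r) :
    ∃ rest, m = rest + Finsupp.single q 1 + Finsupp.single r 1 := by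
  have hq' : (m - Finsupp.single r 1 : σ →₀ ℕ) q ≠ 0 := by
    simpa [Finsupp.single_apply, hqr.symm] using hq
  refine ⟨m - Finsupp.single r 1 - Finsupp.single q 1, ?_⟩
  rw [Finsupp.sub_add_single_one_cancel hq',
    Finsupp.sub_add_single_one_cancel (Finsupp.mem_support_iff.mp hr)]

namespace MvPolynomial

theorem aeval_monomial_one_monomial {σ τ R : Type*} [CommSemiring R] (v : σ → τ →₀ ℕ)
    (m : σ →₀ ℕ) (a : R) :
    aeval (fun i => (monomial (v i) 1 : MvPolynomial τ R)) (monomial m a) =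
      monomial (Finsupp.linearCombination ℕ v m) a := by
  simp only [aeval_monomial, monomial_pow, one_pow, algebraMap_eq,
    Finsupp.linearCombination_apply, monomial_finsupp_sum_index]

variable {σ τ R : Type*} [CommRing R]

theorem mem_ideal_of_monomial_map_eq_zero (φ : MvPolynomial σ R →+ MvPolynomial τ R)
    (ψ : (σ →₀ ℕ) → (τ →₀ ℕ)) (hφ : ∀ m a, φ (monomial m a) = monomial (ψ m) a)
    (I : Ideal (MvPolynomial σ R))
    (hI : ∀ m m', ψ m = ψ m' → (monomial m 1 - monomial m' 1 : MvPolynomial σ R) ∈ I)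
    {P : MvPolynomial σ R} (hP : φ P = 0) : P ∈ I := by
  -- `ρ` keeps one monomial in each fibre of `ψ` and factors through `φ`.
  let ρ (Q : MvPolynomial σ R) : MvPolynomial σ R :=
    AddMonoidAlgebra.mapDomain (Function.invFun ψ) (φ Q)
  have hρ : ∀ Q, Q - ρ Q ∈ I := by
    intro Q
    induction Q using MvPolynomial.induction_on' with
    | monomial m a =>
      have hm : ψ (Function.invFun ψ (ψ m)) = ψ m := Function.invFun_eq ⟨m, rfl⟩
      have : ρ (monomial m a) = monomial (Function.invFun ψ (ψ m)) a := by
        simp only [ρ, hφ]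
        exact AddMonoidAlgebra.mapDomain_single
      rw [this, ← mul_one a, ← smul_eq_mul, ← smul_monomial, ← smul_monomial, ← smul_sub]
      exact Submodule.smul_of_tower_mem I a (hI _ _ hm.symm)
    | add Q₁ Q₂ h₁ h₂ =>
      have : ρ (Q₁ + Q₂) = ρ Q₁ + ρ Q₂ := by
        simp only [ρ, map_add]
        exact AddMonoidAlgebra.mapDomain_add _ _ _
      rw [this, add_sub_add_comm]
      exact add_mem h₁ h₂
  have h0 : ρ P = 0 := by
    simp only [ρ, hP]
    exact AddMonoidAlgebra.mapDomain_zero _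
  simpa [h0] using hρ P

theorem monomial_sub_monomial_mem_of_exchange {M : Type*} [AddMonoid M] [IsRightCancelAdd M]
    (ψ : (σ →₀ ℕ) →+ M) (hψ : ∀ m, ψ m = 0 → m = 0) (I : Ideal (MvPolynomial σ R))
    (hex : ∀ m m', ψ m = ψ m' → m' ≠ 0 → ∃ p ∈ m'.support, ∃ m₂, ψ m₂ = ψ m ∧ p ∈ m₂.support ∧
      (monomial m 1 - monomial m₂ 1 : MvPolynomial σ R) ∈ I)
    (m m' : σ →₀ ℕ) (h : ψ m = ψ m') : (monomial m 1 - monomial m' 1 : MvPolynomial σ R) ∈ I := by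
  induction m' using WellFoundedLT.induction generalizing m with
  | ind m' ih =>
  by_cases hm' : m' = 0
  · subst hm'
    rw [hψ m (h.trans ψ.map_zero), sub_self]
    exact I.zero_mem
  obtain ⟨p, hp', m₂, hψ₂, hp₂, hmm₂⟩ := hex m m' h hm'
  set a' := m' - Finsupp.single p 1
  set a₂ := m₂ - Finsupp.single p 1
  have ha' : a' + Finsupp.single p 1 = m' :=
    Finsupp.sub_add_single_one_cancel (Finsupp.mem_support_iff.mp hp')
  have ha₂ : a₂ + Finsupp.single p 1 = m₂ :=
    Finsupp.sub_add_single_one_cancel (Finsupp.mem_support_iff.mp hp₂)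
  have hlt : a' < m' := by
    rw [← ha']
    exact lt_add_of_pos_right _ (pos_iff_ne_zero.mpr (by simp))
  have hψa : ψ a₂ = ψ a' := by
    apply add_right_cancel (b := ψ (Finsupp.single p 1))
    rw [← map_add, ← map_add, ha', ha₂, hψ₂, h]
  have hsplit : (monomial m 1 - monomial m' 1 : MvPolynomial σ R) =
      (monomial m 1 - monomial m₂ 1) + X p * (monomial a₂ 1 - monomial a' 1) := by
    rw [← ha', ← ha₂, X, mul_sub, monomial_mul, monomial_mul, one_mul,
      add_comm (Finsupp.single p 1), add_comm (Finsupp.single p 1)]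
    ring
  rw [hsplit]
  exact add_mem hmm₂ (I.mul_mem_left _ (ih a' hlt a₂ hψa))

end MvPolynomial

namespace Segre

variable {c n : ℕ}

variable (c n) in
noncomputable def segreExp (p : PIdx n) : BVar c n →₀ ℕ :=
  if h : p.val.2.val < c ∨ c ≤ p.val.1.val then Finsupp.single (Sum.inl ⟨p, h⟩) 1
  else Finsupp.single (Sum.inr p.val.1) 1 + Finsupp.single (Sum.inr p.val.2) 1

variable (c n) in
noncomputable def segreExpHom : (PIdx n →₀ ℕ) →+ (BVar c n →₀ ℕ) :=
  (Finsupp.linearCombination ℕ (segreExp c n)).toAddMonoidHom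

theorem segre_eq_aeval_monomial :
    segre c n = aeval fun p => monomial (segreExp c n p) 1 := by
  rw [segre]
  congr 1
  funext p
  rw [segreExp]
  split_ifs
  · rfl
  · rw [monomial_add_single, pow_one]
    rfl

theorem segre_monomial (m : PIdx n →₀ ℕ) (a : ℂ) :
    segre c n (monomial m a) = monomial (segreExpHom c n m) a := by
  rw [segre_eq_aeval_monomial, aeval_monomial_one_monomial]
  rfl

theorem segreExpHom_single (p : PIdx n) :
    segreExpHom c n (Finsupp.single p 1) = segreExp c n p := by
  simp [segreExpHom]

theorem segreExp_of_cross {i k : Fin n} (h : i < k) (hi : i.val < c) (hk : c ≤ k.val) :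
    segreExp c n ⟨(i, k), h⟩ = Finsupp.single (Sum.inr i) 1 + Finsupp.single (Sum.inr k) 1 := by
  rw [segreExp, dif_neg (by simp only; omega)]

theorem segreExpHom_inl (m : PIdx n →₀ ℕ) {p : PIdx n} (h : p.val.2.val < c ∨ c ≤ p.val.1.val) :
    segreExpHom c n m (Sum.inl ⟨p, h⟩) = m p := by
  have hexp : ∀ q, segreExp c n q (Sum.inl ⟨p, h⟩) = if q = p then 1 else 0 := by
    intro q
    rw [segreExp]
    split_ifs <;> simp_all [eq_comm]
  simp [segreExpHom, Finsupp.linearCombination_apply, hexp]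

theorem segreExp_inr_ne_zero_iff (q : PIdx n) (a : Fin n) :
    segreExp c n q (Sum.inr a) ≠ 0 ↔
      ¬(q.val.2.val < c ∨ c ≤ q.val.1.val) ∧ (q.val.1 = a ∨ q.val.2 = a) := by
  rw [segreExp]
  split_ifs with h
  · simp [h]
  · simp [h, Finsupp.single_apply, eq_comm, or_iff_not_imp_left]

theorem segreExpHom_inr_ne_zero_iff (m : PIdx n →₀ ℕ) (a : Fin n) :
    segreExpHom c n m (Sum.inr a) ≠ 0 ↔
      ∃ q ∈ m.support, ¬(q.val.2.val < c ∨ c ≤ q.val.1.val) ∧ (q.val.1 = a ∨ q.val.2 = a) := by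
  simp only [segreExpHom, LinearMap.toAddMonoidHom_coe, Finsupp.linearCombination_apply_ne_zero_iff,
    segreExp_inr_ne_zero_iff]

theorem eq_zero_of_segreExpHom_eq_zero {m : PIdx n →₀ ℕ} (h : segreExpHom c n m = 0) : m = 0 := by
  by_contra hm
  obtain ⟨p, hp⟩ := Finsupp.support_nonempty_iff.mpr hm
  by_cases hpure : p.val.2.val < c ∨ c ≤ p.val.1.val
  · have hp0 := segreExpHom_inl m hpure
    rw [h] at hp0
    exact Finsupp.mem_support_iff.mp hp hp0.symm
  · exact (segreExpHom_inr_ne_zero_iff m p.val.1).mpr ⟨p, hp, hpure, Or.inl rfl⟩ (by rw [h]; rfl)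

theorem exists_mem_support_in_row {m : PIdx n →₀ ℕ} {i : Fin n} (hi : i.val < c)
    (h : segreExpHom c n m (Sum.inr i) ≠ 0) :
    ∃ k, ∃ hik : i < k, c ≤ k.val ∧ (⟨(i, k), hik⟩ : PIdx n) ∈ m.support := by
  obtain ⟨⟨⟨i', k⟩, hik⟩, hq, hcross, rfl | rfl⟩ := (segreExpHom_inr_ne_zero_iff m i).mp h
  · exact ⟨k, hik, by simp only at hcross; omega, hq⟩
  · simp only at hi hcross; omega

theorem exists_mem_support_in_col {m : PIdx n →₀ ℕ} {k : Fin n} (hk : c ≤ k.val)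
    (h : segreExpHom c n m (Sum.inr k) ≠ 0) :
    ∃ i, ∃ hik : i < k, i.val < c ∧ (⟨(i, k), hik⟩ : PIdx n) ∈ m.support := by
  obtain ⟨⟨⟨i, k'⟩, hik⟩, hq, hcross, rfl | rfl⟩ := (segreExpHom_inr_ne_zero_iff m k).mp h
  · simp only at hk hcross; omega
  · exact ⟨i, hik, by simp only at hcross; omega, hq⟩

theorem tv_mul_tv_sub_mem_span {i j k l : Fin n} (hi : i.val < c) (hj : j.val < c)
    (hk : c ≤ k.val) (hl : c ≤ l.val) :
    Tv i k (Fin.lt_def.mpr (by omega)) * Tv j l (Fin.lt_def.mpr (by omega)) -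
        Tv i l (Fin.lt_def.mpr (by omega)) * Tv j k (Fin.lt_def.mpr (by omega)) ∈
      Ideal.span (segreKerGens c n) := by
  have hgen : ∀ {i j k l : Fin n} (hij : i < j) (hjk : j < k) (hkl : k < l), j.val < c →
      c ≤ k.val → -Tv i k (hij.trans hjk) * Tv j l (hjk.trans hkl) +
        Tv i l (hij.trans (hjk.trans hkl)) * Tv j k hjk ∈ Ideal.span (segreKerGens c n) :=
    fun hij hjk hkl hj hk => Ideal.subset_span ⟨_, _, _, _, hij, hjk, hkl, hj, hk, rfl⟩
  rcases lt_trichotomy i j with hij | rfl | hij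
  · rcases lt_trichotomy k l with hkl | rfl | hkl
    · convert neg_mem (hgen hij (Fin.lt_def.mpr (by omega)) hkl hj hk) using 1; ring
    · simp
    · convert hgen hij (Fin.lt_def.mpr (by omega)) hkl hj hl using 1; ring
  · rw [mul_comm, sub_self]
    exact zero_mem _
  · rcases lt_trichotomy k l with hkl | rfl | hkl
    · convert hgen hij (Fin.lt_def.mpr (by omega)) hkl hi hk using 1; ring
    · simp
    · convert neg_mem (hgen hij (Fin.lt_def.mpr (by omega)) hkl hi hl) using 1; ring

theorem segre_exchange {m m' : PIdx n →₀ ℕ} (h : segreExpHom c n m = segreExpHom c n m')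
    (hm' : m' ≠ 0) :
    ∃ p ∈ m'.support, ∃ m₂, segreExpHom c n m₂ = segreExpHom c n m ∧ p ∈ m₂.support ∧
      (monomial m 1 - monomial m₂ 1 : MvPolynomial (PIdx n) ℂ) ∈ Ideal.span (segreKerGens c n) := by
  obtain ⟨p, hp⟩ := Finsupp.support_nonempty_iff.mpr hm'
  refine ⟨p, hp, ?_⟩
  by_cases hpm : p ∈ m.support
  · exact ⟨m, rfl, hpm, by simp⟩
  obtain ⟨⟨i, k⟩, hik⟩ := p
  have hcross : ¬(k.val < c ∨ c ≤ i.val) := by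
    intro hpure
    have hmm' := segreExpHom_inl m (p := ⟨(i, k), hik⟩) hpure
    rw [h, segreExpHom_inl] at hmm'
    exact hpm (Finsupp.mem_support_iff.mpr (hmm' ▸ Finsupp.mem_support_iff.mp hp))
  have hrow : segreExpHom c n m (Sum.inr i) ≠ 0 :=
    h ▸ (segreExpHom_inr_ne_zero_iff m' i).mpr ⟨_, hp, hcross, Or.inl rfl⟩
  have hcol : segreExpHom c n m (Sum.inr k) ≠ 0 :=
    h ▸ (segreExpHom_inr_ne_zero_iff m' k).mpr ⟨_, hp, hcross, Or.inr rfl⟩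
  obtain ⟨k', hik', hk', hq⟩ := exists_mem_support_in_row (by omega) hrow
  obtain ⟨i', hi'k, hi', hr⟩ := exists_mem_support_in_col (by omega) hcol
  have hqr : (⟨(i, k'), hik'⟩ : PIdx n) ≠ ⟨(i', k), hi'k⟩ := by
    intro hqr
    simp only [Subtype.mk.injEq, Prod.mk.injEq] at hqr
    obtain ⟨rfl, rfl⟩ := hqr
    exact hpm hq
  obtain ⟨rest, rfl⟩ := Finsupp.exists_eq_add_single_add_single hq hr hqr
  have hi'k' : i' < k' := Fin.lt_def.mpr (by omega)
  refine ⟨rest + Finsupp.single ⟨(i, k), hik⟩ 1 + Finsupp.single ⟨(i', k'), hi'k'⟩ 1, ?_,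
    by simp, ?_⟩
  · simp only [map_add, segreExpHom_single]
    rw [segreExp_of_cross _ (by omega) (by omega), segreExp_of_cross _ (by omega) (by omega),
      segreExp_of_cross _ (by omega) (by omega), segreExp_of_cross _ (by omega) (by omega)]
    abel
  · have hswap := tv_mul_tv_sub_mem_span (c := c) (i := i) (j := i') (k := k') (l := k)
      (by omega) hi' hk' (by omega)
    convert Ideal.mul_mem_left _ (monomial rest 1) hswap using 1
    simp only [monomial_add_single, pow_one, Tv]
    ring

theorem segre_tv_of_cross {i k : Fin n} (h : i < k) (hi : i.val < c) (hk : c ≤ k.val) :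
    segre c n (Tv i k h) = X (Sum.inr i) * X (Sum.inr k) := by
  rw [Tv, segre, aeval_X, dif_neg (by simp only; omega)]

theorem span_segreKerGens_le_ker :
    Ideal.span (segreKerGens c n) ≤ RingHom.ker (segre c n).toRingHom := by
  rw [Ideal.span_le]
  rintro _ ⟨i, j, k, l, hij, hjk, hkl, hj, hk, rfl⟩
  rw [Fin.lt_def] at hij hkl
  change segre c n _ = 0
  rw [map_add, neg_mul, map_neg, map_mul, map_mul, segre_tv_of_cross _ (by omega) hk,
    segre_tv_of_cross _ hj (by omega), segre_tv_of_cross _ (by omega) (by omega),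
    segre_tv_of_cross _ hj hk]
  ring

variable (c n) in
theorem ker_segre : RingHom.ker (segre c n).toRingHom = Ideal.span (segreKerGens c n) := by
  refine le_antisymm (fun P hP => ?_) span_segreKerGens_le_ker
  refine mem_ideal_of_monomial_map_eq_zero (segre c n).toAddMonoidHom (segreExpHom c n)
    segre_monomial _ ?_ hP
  exact monomial_sub_monomial_mem_of_exchange (segreExpHom c n)
    (fun _ => eq_zero_of_segreExpHom_eq_zero) (Ideal.span (segreKerGens c n)) (fun _ _ => segre_exchange)

end Segre

theorem stmt_5_general (c d : ℕ) :
    RingHom.ker (segre c (c + d)).toRingHom =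
      Ideal.span (segreKerGens c (c + d)) :=
  Segre.ker_segre c (c + d)

/-- For `c, d > 2` and `n = c + d`, the kernel of the Segre-type map `σ : A → B` is
generated by the binomials `g_{ijkl} = -T_{ik}T_{jl} + T_{il}T_{jk}` for
`i < j ≤ c < k < l`. -/
theorem stmt_5 (c d : ℕ) (hc : 2 < c) (hd : 2 < d) :
    RingHom.ker (segre c (c + d)).toRingHom =
      Ideal.span (segreKerGens c (c + d)) :=
  stmt_5_general c d
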